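/- arXiv:1601.05487 — 2 statements merged into one kernel-verified Lean document; each statement's English description precedes it below -/
import Mathlib

section
/- Let a < 0 and let P(z) = ∑_{n=0}^{2m} b_n z^n be a polynomial with real coefficients. Write e^{az²}·P(z) = ∑_{n=0}^∞ a_n z^n. Then there exists n₀ ∈ ℕ such that a_{n-1}·a_{n+1} ≤ 0 for every n > n₀. -/
/-!
The coefficients are `A n = ∑ⱼ b_j γ_(n-j)`, where `γ_(2k) = aᵏ / k!` and `γ` vanishes at
odd indices, so only the `b_j` with `j ≡ n (mod 2)` contribute to `A n`. In a parity class
let `D` be the largest index with `b_D ≠ 0`. Since `γ_(2k+2l) / γ_(2k) = aˡ k! / (k+l)! → 0`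
for `l > 0`, `A (D + 2k) / γ_(2k) → b_D ≠ 0`, and `γ_(2k)` alternates in sign because
`a < 0`; hence so does `A (D + 2k)` for large `k`. A parity class without such a `D` has
`A n = 0` throughout.
-/

open Filter Topology Polynomial

section PowerSeriesUniqueness

variable {𝕜 : Type*} [NontriviallyNormedField 𝕜]

theorem hasFPowerSeriesOnBall_ofScalars_of_hasSum {C : ℕ → 𝕜} {f : 𝕜 → 𝕜}
    (h : ∀ z, HasSum (fun n => C n * z ^ n) (f z)) :
    HasFPowerSeriesOnBall f (FormalMultilinearSeries.ofScalars 𝕜 C) 0 1 where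
  r_le := by
    have hC : Tendsto (fun n => ‖C n‖) atTop (𝓝 0) := by
      simpa using (h 1).summable.tendsto_atTop_zero.norm
    simpa using (FormalMultilinearSeries.ofScalars 𝕜 C).le_radius_of_tendsto (r := 1)
      (by simpa [FormalMultilinearSeries.ofScalars_norm] using hC)
  r_pos := one_pos
  hasSum {y} _ := by
    simpa [FormalMultilinearSeries.ofScalars_apply_eq, mul_comm] using h y

theorem eq_of_hasSum_mul_pow {C C' : ℕ → 𝕜} {f : 𝕜 → 𝕜}
    (h : ∀ z, HasSum (fun n => C n * z ^ n) (f z))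
    (h' : ∀ z, HasSum (fun n => C' n * z ^ n) (f z)) : C = C' :=
  FormalMultilinearSeries.ofScalars_series_injective 𝕜 𝕜 <|
    (hasFPowerSeriesOnBall_ofScalars_of_hasSum h).hasFPowerSeriesAt.eq_formalMultilinearSeries
      (hasFPowerSeriesOnBall_ofScalars_of_hasSum h').hasFPowerSeriesAt

end PowerSeriesUniqueness

theorem HasSum.ite_le_mul_pow {f : ℕ → ℂ} {z s : ℂ} (h : HasSum (fun n => f n * z ^ n) s)
    (j : ℕ) : HasSum (fun n => (if j ≤ n then f (n - j) else 0) * z ^ n) (z ^ j * s) := by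
  rw [← hasSum_nat_add_iff' j]
  have hhead : ∑ n ∈ Finset.range j, (if j ≤ n then f (n - j) else 0) * z ^ n = 0 :=
    Finset.sum_eq_zero fun n hn => by simp [(Finset.mem_range.1 hn).not_ge]
  rw [hhead, sub_zero]
  refine (h.mul_left (z ^ j)).congr_fun fun n => ?_
  rw [if_pos (Nat.le_add_left j n), Nat.add_sub_cancel, pow_add]
  ring

noncomputable def coeffMulSeries (P : ℝ[X]) (c : ℕ → ℝ) (n : ℕ) : ℝ :=
  P.sum fun j b => if j ≤ n then b * c (n - j) else 0

theorem hasSum_coeffMulSeries {P : ℝ[X]} {c : ℕ → ℝ} {z s : ℂ}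
    (h : HasSum (fun n => (c n : ℂ) * z ^ n) s) :
    HasSum (fun n => (coeffMulSeries P c n : ℂ) * z ^ n) (s * aeval z P) := by
  have hterm : ∀ j ∈ P.support, HasSum
      (fun n => ((if j ≤ n then P.coeff j * c (n - j) else 0 : ℝ) : ℂ) * z ^ n)
      ((P.coeff j : ℂ) * z ^ j * s) := fun j _ => by
    have hj : HasSum (fun n => (P.coeff j * c n : ℂ) * z ^ n) (P.coeff j * s) := by
      simpa only [mul_assoc] using h.mul_left (P.coeff j : ℂ)
    convert hj.ite_le_mul_pow j using 1
    · ext n; split_ifs <;> simp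
    · ring
  convert hasSum_sum hterm using 1
  · ext n
    rw [coeffMulSeries, Polynomial.sum, Complex.ofReal_sum, Finset.sum_mul]
  · rw [aeval_def, eval₂_eq_sum, Polynomial.sum, Finset.mul_sum]
    refine Finset.sum_congr rfl fun j _ => ?_
    simp only [Complex.coe_algebraMap]
    ring

noncomputable def gaussCoeff (a : ℝ) (m : ℕ) : ℝ :=
  if Even m then a ^ (m / 2) / (m / 2).factorial else 0

theorem gaussCoeff_two_mul (a : ℝ) (k : ℕ) : gaussCoeff a (2 * k) = a ^ k / k.factorial := by
  simp [gaussCoeff]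

theorem gaussCoeff_of_not_even (a : ℝ) {m : ℕ} (hm : ¬ Even m) : gaussCoeff a m = 0 :=
  if_neg hm

theorem hasSum_gaussCoeff (a : ℝ) (z : ℂ) :
    HasSum (fun m => (gaussCoeff a m : ℂ) * z ^ m) (Complex.exp (a * z ^ 2)) := by
  have hexp : HasSum (fun k : ℕ => ((a : ℂ) * z ^ 2) ^ k / k.factorial)
      (Complex.exp (a * z ^ 2)) := by
    rw [Complex.exp_eq_exp_ℂ]
    exact NormedSpace.expSeries_div_hasSum_exp _
  refine ((mul_right_injective₀ two_ne_zero).hasSum_iff fun m hm => ?_).mp ?_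
  · have hodd : ¬ Even m := fun ⟨k, hk⟩ => hm ⟨k, by simp only; omega⟩
    simp [gaussCoeff_of_not_even a hodd]
  · refine hexp.congr_fun fun k => ?_
    simp only [Function.comp, gaussCoeff_two_mul]
    push_cast
    ring

theorem gaussCoeff_two_mul_mul_gaussCoeff_two_mul_succ_neg {a : ℝ} (ha : a < 0) (k : ℕ) :
    gaussCoeff a (2 * k) * gaussCoeff a (2 * (k + 1)) < 0 := by
  have hpow : a ^ k * a ^ (k + 1) < 0 := by
    rw [← pow_add]
    exact Odd.pow_neg ⟨k, by ring⟩ ha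
  rw [gaussCoeff_two_mul, gaussCoeff_two_mul, div_mul_div_comm]
  exact div_neg_of_neg_of_pos hpow (by positivity)

theorem tendsto_factorial_div_factorial_add {l : ℕ} (hl : 0 < l) :
    Tendsto (fun k => (k.factorial : ℝ) / (l + k).factorial) atTop (𝓝 0) := by
  refine squeeze_zero (fun k => by positivity) (fun k => ?_) tendsto_one_div_add_atTop_nhds_zero_nat
  calc (k.factorial : ℝ) / (l + k).factorial ≤ k.factorial / (k + 1).factorial :=
        div_le_div_of_nonneg_left (by positivity) (by positivity)
          (Nat.cast_le.2 (Nat.factorial_le (by omega)))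
    _ = 1 / (k + 1) := by
        rw [Nat.factorial_succ]
        push_cast
        field_simp

theorem tendsto_gaussCoeff_add_two_mul_div {a : ℝ} (ha : a ≠ 0) (m : ℕ) :
    Tendsto (fun k => gaussCoeff a (m + 2 * k) / gaussCoeff a (2 * k)) atTop
      (𝓝 (if m = 0 then 1 else 0)) := by
  rcases Nat.even_or_odd' m with ⟨l, rfl | rfl⟩
  · have hratio : ∀ k, gaussCoeff a (2 * l + 2 * k) / gaussCoeff a (2 * k)
        = a ^ l * ((k.factorial : ℝ) / (l + k).factorial) := fun k => by
      rw [← mul_add, gaussCoeff_two_mul, gaussCoeff_two_mul, pow_add]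
      field_simp
    simp_rw [hratio]
    rcases Nat.eq_zero_or_pos l with rfl | hl
    · simp [Nat.factorial_ne_zero]
    · simpa [hl.ne'] using (tendsto_factorial_div_factorial_add hl).const_mul (a ^ l)
  · have hodd : ∀ k, ¬ Even (2 * l + 1 + 2 * k) := fun k => by
      rw [Nat.not_even_iff_odd]; exact ⟨l + k, by ring⟩
    simp [gaussCoeff_of_not_even a (hodd _)]

theorem eventually_mul_succ_neg_of_tendsto_div {u w : ℕ → ℝ} {L : ℝ} (hL : L ≠ 0)
    (hw : ∀ k, w k * w (k + 1) < 0) (h : Tendsto (fun k => u k / w k) atTop (𝓝 L)) :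
    ∀ᶠ k in atTop, u k * u (k + 1) < 0 := by
  have hprod : Tendsto (fun k => u k / w k * (u (k + 1) / w (k + 1))) atTop (𝓝 (L * L)) :=
    h.mul (h.comp (tendsto_add_atTop_nat 1))
  filter_upwards [hprod.eventually (lt_mem_nhds (mul_self_pos.2 hL))] with k hk
  have hwk : w k ≠ 0 := fun h0 => by simpa [h0] using hw k
  have hwk' : w (k + 1) ≠ 0 := fun h0 => by simpa [h0] using hw k
  calc u k * u (k + 1) = u k / w k * (u (k + 1) / w (k + 1)) * (w k * w (k + 1)) := by
        field_simp
    _ < 0 := mul_neg_of_pos_of_neg hk (hw k)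

theorem coeffMulSeries_gaussCoeff_eq_zero (a : ℝ) {P : ℝ[X]} {n : ℕ}
    (h : ∀ j ∈ P.support, j % 2 ≠ n % 2) : coeffMulSeries P (gaussCoeff a) n = 0 :=
  Finset.sum_eq_zero fun j hj => by
    dsimp only
    split_ifs
    · rw [gaussCoeff_of_not_even a (by rw [Nat.even_iff]; have := h j hj; omega), mul_zero]
    · rfl

theorem tendsto_coeffMulSeries_gaussCoeff_div {a : ℝ} (ha : a ≠ 0) {P : ℝ[X]} {D : ℕ}
    (hD : D ∈ P.support) (hmax : ∀ j ∈ P.support, j % 2 = D % 2 → j ≤ D) :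
    Tendsto (fun k => coeffMulSeries P (gaussCoeff a) (D + 2 * k) / gaussCoeff a (2 * k))
      atTop (𝓝 (P.coeff D)) := by
  have hterm : ∀ j ∈ P.support, Tendsto (fun k =>
      (if j ≤ D + 2 * k then P.coeff j * gaussCoeff a (D + 2 * k - j) else 0) /
        gaussCoeff a (2 * k)) atTop (𝓝 (if j = D then P.coeff j else 0)) := fun j hj => by
    by_cases hjD : j ≤ D
    · obtain ⟨m, rfl⟩ := Nat.exists_eq_add_of_le hjD
      have hshift : ∀ k, j + m + 2 * k - j = m + 2 * k := fun k => by omega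
      simp_rw [hshift, if_pos (Nat.le_add_right_of_le (Nat.le_add_right j m)), mul_div_assoc]
      simpa using (tendsto_gaussCoeff_add_two_mul_div ha m).const_mul (P.coeff j)
    · have hpar : j % 2 ≠ D % 2 := fun h => hjD (hmax j hj h)
      have hzero : ∀ k,
          (if j ≤ D + 2 * k then P.coeff j * gaussCoeff a (D + 2 * k - j) else 0) = 0 := by
        intro k
        split_ifs
        · rw [gaussCoeff_of_not_even a (by rw [Nat.even_iff]; omega), mul_zero]
        · rfl
      simp [hzero, show j ≠ D by omega]
  have hsum := tendsto_finsetSum _ hterm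
  rw [Finset.sum_ite_eq', if_pos hD] at hsum
  simpa only [coeffMulSeries, Polynomial.sum, Finset.sum_div] using hsum

theorem eventually_coeffMulSeries_gaussCoeff_mul_nonpos_of_mod_two {a : ℝ} (ha : a < 0)
    (P : ℝ[X]) (r : ℕ) : ∀ᶠ n in atTop, n % 2 = r →
      coeffMulSeries P (gaussCoeff a) n * coeffMulSeries P (gaussCoeff a) (n + 2) ≤ 0 := by
  by_cases hr : ∃ j ∈ P.support, j % 2 = r
  · obtain ⟨D, hD, hmax⟩ := (P.support.filter (· % 2 = r)).exists_max_image id <| by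
      obtain ⟨j, hj, hjr⟩ := hr
      exact ⟨j, Finset.mem_filter.2 ⟨hj, hjr⟩⟩
    obtain ⟨hDP, hDr⟩ := Finset.mem_filter.1 hD
    have hsign := eventually_mul_succ_neg_of_tendsto_div (mem_support_iff.1 hDP)
      (gaussCoeff_two_mul_mul_gaussCoeff_two_mul_succ_neg ha)
      (tendsto_coeffMulSeries_gaussCoeff_div ha.ne hDP
        fun j hj hjD => hmax j (Finset.mem_filter.2 ⟨hj, hjD.trans hDr⟩))
    obtain ⟨K, hK⟩ := eventually_atTop.1 hsign
    filter_upwards [eventually_ge_atTop (D + 2 * K)] with n hn hnr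
    obtain ⟨k, rfl⟩ : ∃ k, n = D + 2 * k := ⟨(n - D) / 2, by omega⟩
    simpa [mul_add, add_assoc] using (hK k (by omega)).le
  · push Not at hr
    filter_upwards with n hnr
    rw [coeffMulSeries_gaussCoeff_eq_zero a fun j hj => hnr ▸ hr j hj, zero_mul]

theorem sign_condition_of_gaussian_times_polynomial (a : ℝ) (ha : a < 0)
    (P : Polynomial ℝ) (A : ℕ → ℝ)
    (hA : ∀ z : ℂ, HasSum (fun n => (A n : ℂ) * z ^ n)
      (Complex.exp (a * z ^ 2) * Polynomial.aeval z P)) :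
    ∃ n₀ : ℕ, ∀ n : ℕ, n₀ < n → A (n - 1) * A (n + 1) ≤ 0 := by
  have hAcoeff : A = coeffMulSeries P (gaussCoeff a) := by
    have hcast := eq_of_hasSum_mul_pow hA
      fun z => hasSum_coeffMulSeries (P := P) (hasSum_gaussCoeff a z)
    exact funext fun n => Complex.ofReal_injective (congrFun hcast n)
  have hsign : ∀ᶠ n in atTop, A n * A (n + 2) ≤ 0 := by
    filter_upwards [eventually_coeffMulSeries_gaussCoeff_mul_nonpos_of_mod_two ha P 0,
      eventually_coeffMulSeries_gaussCoeff_mul_nonpos_of_mod_two ha P 1] with n h₀ h₁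
    rw [hAcoeff]
    exact (Nat.mod_two_eq_zero_or_one n).elim h₀ h₁
  obtain ⟨N, hN⟩ := eventually_atTop.1 hsign
  exact ⟨N, fun n hn => by simpa [show n - 1 + 2 = n + 1 by omega] using hN (n - 1) (by omega)⟩
end

section
/- Let a < 0 and let φ(z) = c z^k e^{a z²} ∏_{n=1}^∞ (1 - z²/x_n²) be an even or odd entire function with c ≠ 0, real nonzero x_n with ∑ 1/x_n² < ∞, and Maclaurin expansion φ(z) = ∑ a_n z^n. Then a_{n-1}·a_{n+1} ≤ 0 for every n ≥ 1. -/
open Filter Topology Function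

/-!
The function `ψ(w) = e^{-aw} ∏ (1 + w / x_n²)` has nonnegative Taylor coefficients `q_m`: those
of the partial products `e^{-aw} ∏_{n<N} (1 + w / x_n²)` are nonnegative and increase with `N`, and
their limits are the coefficients of `ψ` by Tannery's theorem, the limit series at the real point
`‖w‖` dominating all the others. Since `φ(z) = c z^k ψ(-z²)`, the coefficient of `φ` at `k + 2m`
is `c (-1)^m q_m` and all the others vanish, so coefficients two apart never have the same strict
sign.
-/

theorem hasFPowerSeriesAt_ofScalars_of_forall_hasSum {u : ℕ → ℂ} {F : ℂ → ℂ}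
    (hu : ∀ z, HasSum (fun n => u n * z ^ n) (F z)) :
    HasFPowerSeriesAt F (FormalMultilinearSeries.ofScalars ℂ u) 0 := by
  refine ⟨1, ?_, one_pos, fun {y} _ => by simpa [mul_comm] using hu y⟩
  refine FormalMultilinearSeries.le_radius_of_tendsto _ (l := 0) ?_
  simpa [FormalMultilinearSeries.ofScalars_norm] using
    (hu 1).summable.tendsto_atTop_zero.norm

theorem eq_of_forall_hasSum_mul_pow {u v : ℕ → ℂ} {F : ℂ → ℂ}
    (hu : ∀ z, HasSum (fun n => u n * z ^ n) (F z))
    (hv : ∀ z, HasSum (fun n => v n * z ^ n) (F z)) : u = v :=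
  FormalMultilinearSeries.ofScalars_series_injective ℂ ℂ <|
    (hasFPowerSeriesAt_ofScalars_of_forall_hasSum hu).eq_formalMultilinearSeries
      (hasFPowerSeriesAt_ofScalars_of_forall_hasSum hv)

theorem hasSum_iSup_of_monotone {u : ℕ → ℕ → ℝ} {f : ℕ → ℂ → ℂ} {g : ℂ → ℂ}
    (hu : ∀ N n, 0 ≤ u N n) (hmono : ∀ n, Monotone (u · n))
    (hf : ∀ N z, HasSum (fun n => (u N n : ℂ) * z ^ n) (f N z))
    (hg : ∀ z, Tendsto (fun N => f N z) atTop (𝓝 (g z))) (z : ℂ) :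
    HasSum (fun n => ((⨆ N, u N n : ℝ) : ℂ) * z ^ n) (g z) := by
  have hre : ∀ N (t : ℝ), HasSum (fun n => u N n * t ^ n) (f N t).re := fun N t => by
    simpa [← Complex.ofReal_pow] using Complex.hasSum_re (hf N t)
  have hpartial : ∀ N {t : ℝ}, 0 ≤ t → ∀ s, ∑ n ∈ s, u N n * t ^ n ≤ (f N t).re :=
    fun N t ht s => sum_le_hasSum s (fun n _ => by have := hu N n; positivity) (hre N t)
  have hbdd : ∀ n, BddAbove (Set.range (u · n)) := by
    intro n
    obtain ⟨C, hC⟩ := ((Complex.continuous_re.tendsto _).comp (hg 1)).bddAbove_range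
    refine ⟨C, ?_⟩
    rintro _ ⟨N, rfl⟩
    simpa using (hpartial N zero_le_one {n}).trans (hC ⟨N, rfl⟩)
  set B := fun n => ⨆ N, u N n
  have hlim : ∀ n, Tendsto (u · n) atTop (𝓝 (B n)) :=
    fun n => tendsto_atTop_ciSup (hmono n) (hbdd n)
  have hle : ∀ N n, u N n ≤ B n := fun N n => le_ciSup (hbdd n) N
  -- The partial sums of the limit series at `‖z‖` are bounded by `(g ‖z‖).re`.
  have hB : Summable fun n => B n * ‖z‖ ^ n := by
    refine summable_of_sum_range_le (c := (g ‖z‖).re)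
      (fun n => mul_nonneg ((hu 0 n).trans (hle 0 n)) (by positivity)) fun m => ?_
    refine le_of_tendsto_of_tendsto' (tendsto_finsetSum _ fun n _ => (hlim n).mul_const _)
      ((Complex.continuous_re.tendsto _).comp (hg ‖z‖)) fun N => hpartial N (norm_nonneg z) _
  have hnorm : ∀ N n, ‖(u N n : ℂ) * z ^ n‖ ≤ B n * ‖z‖ ^ n := fun N n => by
    rw [norm_mul, norm_pow, Complex.norm_real, Real.norm_of_nonneg (hu N n)]
    exact mul_le_mul_of_nonneg_right (hle N n) (by positivity)
  have hsummable : Summable fun n => (B n : ℂ) * z ^ n := by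
    refine Summable.of_norm_bounded hB fun n => ?_
    rw [norm_mul, norm_pow, Complex.norm_real, Real.norm_of_nonneg ((hu 0 n).trans (hle 0 n))]
  refine hsummable.hasSum_iff.mpr (tendsto_nhds_unique ?_ (hg z))
  refine (tendsto_tsum_of_dominated_convergence hB (fun n => ?_)
    (Eventually.of_forall (hnorm ·))).congr fun N => (hf N z).tsum_eq
  exact ((Complex.continuous_ofReal.tendsto _).comp (hlim n)).mul_const _

noncomputable def expMulProdCoeff (b : ℝ) (s : ℕ → ℝ) : ℕ → ℕ → ℝ
  | 0, m => b ^ m / m.factorial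
  | N + 1, 0 => expMulProdCoeff b s N 0
  | N + 1, m + 1 => expMulProdCoeff b s N (m + 1) + s N * expMulProdCoeff b s N m

section
variable {b : ℝ} {s : ℕ → ℝ}

theorem expMulProdCoeff_nonneg (hb : 0 ≤ b) (hs : ∀ i, 0 ≤ s i) :
    ∀ N m, 0 ≤ expMulProdCoeff b s N m
  | 0, m => by rw [expMulProdCoeff]; positivity
  | N + 1, 0 => by rw [expMulProdCoeff]; exact expMulProdCoeff_nonneg hb hs N 0
  | N + 1, m + 1 => by
    rw [expMulProdCoeff]
    have := expMulProdCoeff_nonneg hb hs N (m + 1)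
    have := expMulProdCoeff_nonneg hb hs N m
    have := hs N
    positivity

theorem expMulProdCoeff_monotone (hb : 0 ≤ b) (hs : ∀ i, 0 ≤ s i) (m : ℕ) :
    Monotone (expMulProdCoeff b s · m) := by
  refine monotone_nat_of_le_succ fun N => ?_
  cases m with
  | zero => rw [expMulProdCoeff]
  | succ m =>
    rw [expMulProdCoeff]
    exact le_add_of_nonneg_right (mul_nonneg (hs N) (expMulProdCoeff_nonneg hb hs N m))

theorem hasSum_expMulProdCoeff (w : ℂ) :
    ∀ N, HasSum (fun m => (expMulProdCoeff b s N m : ℂ) * w ^ m)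
      (Complex.exp (b * w) * ∏ i ∈ Finset.range N, (1 + s i * w))
  | 0 => by
    simpa [expMulProdCoeff, Complex.exp_eq_exp_ℂ, mul_pow, div_mul_eq_mul_div] using
      NormedSpace.expSeries_div_hasSum_exp ((b : ℂ) * w)
  | N + 1 => by
    have ih := hasSum_expMulProdCoeff w N
    have hshift := ((hasSum_nat_add_iff' 1).mpr ih).add (ih.mul_left (s N * w))
    rw [Finset.prod_range_succ]
    refine (hasSum_nat_add_iff' 1).mp ?_
    convert hshift using 1
    · ext m
      simp only [expMulProdCoeff]
      push_cast
      ring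
    · simp only [Finset.range_one, Finset.sum_singleton, expMulProdCoeff, pow_zero, mul_one]
      ring
end

theorem exists_nonneg_coeff_hasSum_exp_mul_tprod {b : ℝ} {s : ℕ → ℝ} (hb : 0 ≤ b)
    (hs : ∀ i, 0 ≤ s i) (hsum : Summable s) :
    ∃ q : ℕ → ℝ, (∀ m, 0 ≤ q m) ∧
      ∀ w : ℂ, HasSum (fun m => (q m : ℂ) * w ^ m) (Complex.exp (b * w) * ∏' i, (1 + s i * w)) := by
  refine ⟨fun m => ⨆ N, expMulProdCoeff b s N m, fun m => ?_, fun w => ?_⟩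
  · exact Real.iSup_nonneg fun N => expMulProdCoeff_nonneg hb hs N m
  refine hasSum_iSup_of_monotone (g := fun z => Complex.exp (b * z) * ∏' i, (1 + s i * z))
    (expMulProdCoeff_nonneg hb hs) (expMulProdCoeff_monotone hb hs)
    (fun N z => hasSum_expMulProdCoeff z N) (fun z => ?_) w
  have hmul : Multipliable fun i => 1 + (s i : ℂ) * z :=
    Complex.multipliable_one_add_of_summable ((Complex.summable_ofReal.mpr hsum).mul_right z)
  exact hmul.hasProd.tendsto_prod_nat.const_mul _

theorem add_two_mul_injective (k : ℕ) : Injective fun m => k + 2 * m :=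
  (add_right_injective k).comp (mul_right_injective₀ two_ne_zero)

theorem hasSum_extend_two_mul_add {d : ℕ → ℝ} (k : ℕ) {z F : ℂ}
    (h : HasSum (fun m => (d m : ℂ) * z ^ (k + 2 * m)) F) :
    HasSum (fun n => ((extend (fun m => k + 2 * m) d 0 n : ℝ) : ℂ) * z ^ n) F := by
  have hinj := add_two_mul_injective k
  refine (hinj.hasSum_iff fun n hn => ?_).mp ?_
  · simp [extend_apply' _ _ _ hn]
  · simpa [comp_def, hinj.extend_apply] using h

theorem extend_two_mul_add_sub_one_mul_add_one_nonpos {d : ℕ → ℝ} (k : ℕ)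
    (hd : ∀ m, d m * d (m + 1) ≤ 0) (n : ℕ) :
    extend (fun m => k + 2 * m) d 0 (n - 1) * extend (fun m => k + 2 * m) d 0 (n + 1) ≤ 0 := by
  have hinj := add_two_mul_injective k
  by_cases h₁ : ∃ m, k + 2 * m = n - 1
  · by_cases h₂ : ∃ m, k + 2 * m = n + 1
    · obtain ⟨m, hm⟩ := h₁
      obtain ⟨m', hm'⟩ := h₂
      obtain rfl : m' = m + 1 := by omega
      rw [← hm, ← hm', hinj.extend_apply, hinj.extend_apply]
      exact hd m
    · simp [extend_apply' _ _ _ h₂]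
  · simp [extend_apply' _ _ _ h₁]

theorem hasSum_const_mul_pow_mul_comp_neg_sq {q : ℕ → ℝ} {F : ℂ → ℂ} (c : ℝ) (k : ℕ)
    (hq : ∀ w, HasSum (fun m => (q m : ℂ) * w ^ m) (F w)) (z : ℂ) :
    HasSum (fun m => ((c * (-1) ^ m * q m : ℝ) : ℂ) * z ^ (k + 2 * m))
      (c * z ^ k * F (-z ^ 2)) := by
  have hterm : (fun m => ((c * (-1) ^ m * q m : ℝ) : ℂ) * z ^ (k + 2 * m)) =
      fun m => c * z ^ k * ((q m : ℂ) * (-z ^ 2) ^ m) := by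
    funext m
    push_cast
    ring
  rw [hterm]
  exact (hq _).mul_left _

theorem mul_neg_one_pow_mul_succ_nonpos (c : ℝ) {q : ℕ → ℝ} (hq : ∀ m, 0 ≤ q m) (m : ℕ) :
    c * (-1) ^ m * q m * (c * (-1) ^ (m + 1) * q (m + 1)) ≤ 0 := by
  have hsign : ((-1 : ℝ) ^ m) ^ 2 = 1 := by rw [← pow_mul, pow_mul', neg_one_sq, one_pow]
  have : 0 ≤ c ^ 2 * (q m * q (m + 1)) := by have := hq m; have := hq (m + 1); positivity
  calc c * (-1) ^ m * q m * (c * (-1) ^ (m + 1) * q (m + 1))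
      = -(c ^ 2 * ((-1) ^ m) ^ 2 * (q m * q (m + 1))) := by ring
    _ ≤ 0 := by rw [hsign, mul_one]; linarith

theorem sign_condition_of_symmetric_LP_general (a c : ℝ) (ha : a < 0) (k : ℕ)
    (x : ℕ → ℝ) (hsum : Summable fun n => 1 / (x n) ^ 2)
    (A : ℕ → ℝ)
    (hA : ∀ z : ℂ, HasSum (fun n => (A n : ℂ) * z ^ n)
      ((c : ℂ) * z ^ k * Complex.exp (a * z ^ 2) * ∏' n : ℕ, (1 - z ^ 2 / (x n : ℂ) ^ 2))) :
    ∀ n : ℕ, 1 ≤ n → A (n - 1) * A (n + 1) ≤ 0 := by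
  obtain ⟨q, hq0, hq⟩ := exists_nonneg_coeff_hasSum_exp_mul_tprod (b := -a)
    (by linarith) (fun n => by positivity) hsum
  have hφ : ∀ z : ℂ,
      (c : ℂ) * z ^ k * Complex.exp (a * z ^ 2) * ∏' n, (1 - z ^ 2 / (x n : ℂ) ^ 2) =
        c * z ^ k * (Complex.exp ((-a : ℝ) * -z ^ 2) * ∏' n, (1 + (1 / x n ^ 2 : ℝ) * -z ^ 2)) := by
    intro z
    rw [tprod_congr fun n => show 1 - z ^ 2 / (x n : ℂ) ^ 2 = 1 + (1 / x n ^ 2 : ℝ) * -z ^ 2 by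
      push_cast; ring]
    push_cast
    ring_nf
  have hA_eq : A = extend (fun m => k + 2 * m) (fun m => c * (-1) ^ m * q m) 0 := by
    have := eq_of_forall_hasSum_mul_pow hA fun z => hφ z ▸
      hasSum_extend_two_mul_add k (hasSum_const_mul_pow_mul_comp_neg_sq c k hq z)
    exact funext fun n => by exact_mod_cast congrFun this n
  intro n _
  rw [hA_eq]
  exact extend_two_mul_add_sub_one_mul_add_one_nonpos k (mul_neg_one_pow_mul_succ_nonpos c hq0) n

theorem sign_condition_of_symmetric_LP (a c : ℝ) (ha : a < 0) (hc : c ≠ 0) (k : ℕ)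
    (x : ℕ → ℝ) (hx : ∀ n, x n ≠ 0) (hsum : Summable fun n => 1 / (x n) ^ 2)
    (A : ℕ → ℝ)
    (hA : ∀ z : ℂ, HasSum (fun n => (A n : ℂ) * z ^ n)
      ((c : ℂ) * z ^ k * Complex.exp (a * z ^ 2) * ∏' n : ℕ, (1 - z ^ 2 / (x n : ℂ) ^ 2))) :
    ∀ n : ℕ, 1 ≤ n → A (n - 1) * A (n + 1) ≤ 0 :=
  sign_condition_of_symmetric_LP_general a c ha k x hsum A hA
end
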